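/- arXiv:1411.7681 — 3 statements merged into one kernel-verified Lean document; each statement's English description precedes it below -/
import Mathlib

section
/- With hypotheses as above, the map y ↦ κ_y satisfies κ_{x □ y} = κ_y ∘ κ_x for all x, y ∈ V. Consequently the set κ_V = {κ_x : x ∈ V} is a group (a homomorphic image of (V, □)), hence a p-group, and therefore acts unipotently on (V, ∘). -/
/-!
Associativity of `□` together with additivity of the `κ_y` gives `κ_{x □ y} = κ_y κ_x`.
Moreover `(V, □)` is a group: `0` is neutral because `κ_y 0 = 0`, and `κ_y⁻¹(-y)` is a left
inverse of `y`. As `|V| = p ^ d`, this group is a `p`-group, hence so is its antihomomorphic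
image `κ_V`. Finally, in a ring of characteristic `p`, `g ^ p ^ n = 1` forces
`(g - 1) ^ p ^ n = g ^ p ^ n - 1 = 0`.
-/

section MapMulRev

variable {G H : Type*} [Group G] [Group H] {f : G → H}

def mulOppositeHomOfMapMulRev (hf : ∀ x y, f (x * y) = f y * f x) : G →* Hᵐᵒᵖ :=
  MonoidHom.mk' (fun x => MulOpposite.op (f x)) fun x y => by simp [hf]

theorem exists_subgroup_coe_eq_range_of_map_mul_rev (hf : ∀ x y, f (x * y) = f y * f x) :
    ∃ K : Subgroup H, (K : Set H) = Set.range f :=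
  ⟨(mulOppositeHomOfMapMulRev hf).range.unop, by ext; simp [mulOppositeHomOfMapMulRev]⟩

theorem IsPGroup.exists_pow_eq_one_of_map_mul_rev {p : ℕ} (hG : IsPGroup p G)
    (hf : ∀ x y, f (x * y) = f y * f x) (x : G) : ∃ n : ℕ, f x ^ p ^ n = 1 := by
  obtain ⟨n, hn⟩ := hG x
  refine ⟨n, MulOpposite.op_injective ?_⟩
  calc MulOpposite.op (f x ^ p ^ n) = mulOppositeHomOfMapMulRev hf (x ^ p ^ n) := by
        rw [map_pow, MulOpposite.op_pow]; rfl
    _ = 1 := by rw [hn, map_one]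

end MapMulRev

theorem isNilpotent_sub_one_of_pow_char_pow_eq_one {A : Type*} [Ring A] (p : ℕ) [Fact p.Prime]
    [Algebra (ZMod p) A] {a : A} {n : ℕ} (ha : a ^ p ^ n = 1) : IsNilpotent (a - 1) := by
  -- the zero ring does not have characteristic `p`
  rcases subsingleton_or_nontrivial A with hA | hA
  · exact ⟨1, Subsingleton.elim _ _⟩
  · have : CharP A p := charP_of_injective_algebraMap (algebraMap (ZMod p) A).injective p
    refine ⟨p ^ n, ?_⟩
    rw [sub_pow_char_pow_of_commute (p := p) (h := Commute.one_right a), ha, one_pow, sub_self]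

section Box

variable {R V : Type*} [Semiring R] [AddCommGroup V] [Module R V] {box : V → V → V}
  {κ : V → V ≃ₗ[R] V}

theorem kappa_box_eq_mul (hassoc : ∀ x y z, box (box x y) z = box x (box y z))
    (hκ : ∀ x y, box x y = κ y x + y) (x y : V) : κ (box x y) = κ y * κ x := by
  ext a
  have h := hassoc a x y
  rw [hκ (box a x) y, hκ a x, hκ a (box x y), map_add, add_assoc, ← hκ x y] at h
  exact (add_right_cancel h).symm

variable (κ) in
abbrev boxGroup (hassoc : ∀ x y z, box (box x y) z = box x (box y z))
    (hκ : ∀ x y, box x y = κ y x + y) : Group V :=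
  @Group.ofLeftAxioms V ⟨box⟩ ⟨fun y => (κ y).symm (-y)⟩ ⟨0⟩ hassoc
    (fun x => by change box 0 x = x; simp [hκ])
    (fun y => by change box _ y = 0; simp [hκ])

end Box

theorem kappa_hom_pGroup_unipotent_general
    (p : ℕ) [Fact p.Prime]
    (V : Type*) [AddCommGroup V] [Module (ZMod p) V] [Finite V]
    (box : V → V → V)
    (hassoc : ∀ x y z : V, box (box x y) z = box x (box y z))
    (κ : V → V ≃ₗ[ZMod p] V)
    (hκ : ∀ x y : V, box x y = κ y x + y) :
    -- the composition law
    (∀ x y : V, κ (box x y) = κ y * κ x) ∧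
    -- `κ_V` is a subgroup of `GL(V, ∘)`
    (∃ H : Subgroup (V ≃ₗ[ZMod p] V), (H : Set (V ≃ₗ[ZMod p] V)) = Set.range κ) ∧
    -- `κ_V` is a `p`-group
    (∀ x : V, ∃ n : ℕ, (κ x) ^ (p ^ n) = 1) ∧
    -- `κ_V` acts unipotently on `(V, ∘)`
    (∀ x : V, IsNilpotent ((κ x : V →ₗ[ZMod p] V) - LinearMap.id)) := by
  have hmul := kappa_box_eq_mul hassoc hκ
  let := boxGroup κ hassoc hκ
  have hV : IsPGroup p V :=
    .of_card (by rw [Module.natCard_eq_pow_finrank (K := ZMod p), Nat.card_zmod])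
  have hpow := hV.exists_pow_eq_one_of_map_mul_rev hmul
  refine ⟨hmul, exists_subgroup_coe_eq_range_of_map_mul_rev hmul, hpow, fun x => ?_⟩
  obtain ⟨n, hn⟩ := hpow x
  refine isNilpotent_sub_one_of_pow_char_pow_eq_one p (n := n) ?_
  change LinearEquiv.automorphismGroup.toLinearMapMonoidHom (κ x) ^ p ^ n = 1
  rw [← map_pow, hn, map_one]

/-- With `(V, ∘)` a finite `F_p`-vector space (written additively), `□` an
abelian group operation on `V` with neutral element `0`, and `κ y ∈ GL(V, ∘)` satisfying
`x □ y = κ_y(x) ∘ y`, the map `y ↦ κ_y` satisfies `κ_{x □ y} = κ_y ∘ κ_x`.  Consequently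
`κ_V = {κ_x : x ∈ V}` is a group (a subgroup of `GL(V, ∘)`), it is a `p`-group (every
element has `p`-power order), and it acts unipotently on `(V, ∘)`. -/
theorem kappa_hom_pGroup_unipotent
    (p : ℕ) [Fact p.Prime]
    (V : Type*) [AddCommGroup V] [Module (ZMod p) V] [Finite V]
    (box : V → V → V)
    (hcomm : ∀ x y : V, box x y = box y x)
    (hassoc : ∀ x y z : V, box (box x y) z = box x (box y z))
    (hzero : ∀ x : V, box x 0 = x)
    (κ : V → V ≃ₗ[ZMod p] V)
    (hκ : ∀ x y : V, box x y = κ y x + y) :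
    -- the composition law
    (∀ x y : V, κ (box x y) = κ y * κ x) ∧
    -- `κ_V` is a subgroup of `GL(V, ∘)`
    (∃ H : Subgroup (V ≃ₗ[ZMod p] V), (H : Set (V ≃ₗ[ZMod p] V)) = Set.range κ) ∧
    -- `κ_V` is a `p`-group
    (∀ x : V, ∃ n : ℕ, (κ x) ^ (p ^ n) = 1) ∧
    -- `κ_V` acts unipotently on `(V, ∘)`
    (∀ x : V, IsNilpotent ((κ x : V →ₗ[ZMod p] V) - LinearMap.id)) :=
  kappa_hom_pGroup_unipotent_general p V box hassoc κ hκ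
end

section
/- Let f: F_{2^m} → F_{2^m} be weakly-APN but not APN. Then there exists a nonzero a ∈ F_{2^m} such that Im(D_a f) = {f(x+a)+f(x) : x ∈ F_{2^m}} is not a coset of any F_2-linear subspace of F_{2^m}. -/
/-!
If `D_a f` has a fiber with more than two points, then, since `D_a f` is invariant under
`x ↦ x + a` in characteristic two, all its fibers have at least two points and so
`2 |Im(D_a f)| < 2^m`. Weak APN-ness gives `2^m < 4 |Im(D_a f)|`, so `|Im(D_a f)|` lies strictly
between `2^(m-2)` and `2^(m-1)` and cannot be the size of a coset of an `F_2`-subspace.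
-/

/-- The image of the derivative `D_a f` is a coset of an `F_2`-linear subspace. -/
def IsSubspaceCoset (m : ℕ) (A : Set (GaloisField 2 m)) : Prop :=
  ∃ (w : GaloisField 2 m) (W : Submodule (ZMod 2) (GaloisField 2 m)),
    A = (fun x => w + x) '' (W : Set (GaloisField 2 m))

open Finset

theorem periodic_comp_add_add_of_add_self_eq_zero {G H : Type*} [AddGroup G] [AddCommMagma H]
    (f : G → H) {a : G} (ha : a + a = 0) : Function.Periodic (fun x => f (x + a) + f x) a := fun x => by
  simp only [add_assoc, ha, add_zero, add_comm (f x)]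

theorem Function.Periodic.two_le_natCard_fiber {G β : Type*} [AddGroup G] [Finite G]
    {g : G → β} {a : G} (hg : Function.Periodic g a) (ha : a ≠ 0) (x : G) :
    2 ≤ Nat.card {y | g y = g x} := by
  rw [Nat.card_coe_set_eq]
  exact (Set.one_lt_ncard).mpr ⟨x, rfl, x + a, hg x, by simpa using ha⟩

theorem two_mul_natCard_range_lt {α β : Type*} [Finite α] (g : α → β)
    (hfib : ∀ x, 2 ≤ Nat.card {y | g y = g x}) (hbig : ∃ b, 2 < Nat.card {y | g y = b}) :
    2 * Nat.card (Set.range g) < Nat.card α := by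
  classical
  have := Fintype.ofFinite α
  have hfiber : ∀ b, Nat.card {y | g y = b} = #{y | g y = b} := fun b => by
    rw [Nat.card_eq_fintype_card, Fintype.card_subtype]; rfl
  obtain ⟨b, hb⟩ := hbig
  rw [hfiber] at hb
  have hb_mem : b ∈ univ.image g := by
    obtain ⟨x, hx⟩ := card_pos.mp (by omega : 0 < #{y | g y = b})
    exact mem_image.mpr ⟨x, mem_univ x, (mem_filter.mp hx).2⟩
  calc 2 * Nat.card (Set.range g) = ∑ _ ∈ univ.image g, 2 := by
        rw [← Set.toFinset_range, Nat.card_eq_card_toFinset, sum_const, smul_eq_mul, mul_comm]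
    _ < ∑ c ∈ univ.image g, #{y | g y = c} := by
        refine sum_lt_sum ?_ ⟨b, hb_mem, hb⟩
        simp only [mem_image, mem_univ, true_and, forall_exists_index]
        rintro c x rfl
        exact (hfib x).trans_eq (hfiber _)
    _ = Nat.card α := by
        rw [← card_eq_sum_card_image, card_univ, Nat.card_eq_fintype_card]

theorem natCard_image_add_submodule {K V : Type*} [Field K] [AddCommGroup V] [Module K V]
    [Finite V] (w : V) (W : Submodule K V) :
    Nat.card ((fun x => w + x) '' (W : Set V)) = Nat.card K ^ Module.finrank K W := by
  rw [Nat.card_image_of_injective (add_right_injective w), SetLike.coe_sort_coe,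
    Module.natCard_eq_pow_finrank (K := K)]

theorem IsSubspaceCoset.exists_natCard_eq_two_pow {m : ℕ} {A : Set (GaloisField 2 m)}
    (hA : IsSubspaceCoset m A) : ∃ k, Nat.card A = 2 ^ k := by
  obtain ⟨w, W, rfl⟩ := hA
  exact ⟨_, by rw [natCard_image_add_submodule, Nat.card_zmod]⟩

/-- Let `f : F_{2^m} → F_{2^m}` be weakly-APN (i.e. `|Im(D_a f)| > 2^{m-2}`
for all `a ≠ 0`) but not APN.  Then there exists a nonzero `a` such that
`Im(D_a f) = {f(x+a) + f(x) : x}` is not a coset of any `F_2`-linear subspace. -/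
theorem exists_deriv_image_not_coset_of_weaklyAPN_not_APN
    (m : ℕ) (hm : 1 ≤ m) (f : GaloisField 2 m → GaloisField 2 m)
    -- weakly-APN: `|Im(D_a f)| > 2^{m-2}`, stated as `4·|Im(D_a f)| > 2^m`
    (hweak : ∀ a : GaloisField 2 m, a ≠ 0 →
      2 ^ m < 4 * Nat.card (Set.range fun x => f (x + a) + f x))
    -- not APN
    (hnotAPN : ¬ ∀ a : GaloisField 2 m, a ≠ 0 → ∀ b : GaloisField 2 m,
      Nat.card {x : GaloisField 2 m | f (x + a) + f x = b} ≤ 2) :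
    ∃ a : GaloisField 2 m, a ≠ 0 ∧
      ¬ IsSubspaceCoset m (Set.range fun x => f (x + a) + f x) := by
  push Not at hnotAPN
  obtain ⟨a, ha, b, hb⟩ := hnotAPN
  refine ⟨a, ha, fun hcoset => ?_⟩
  obtain ⟨k, hk⟩ := hcoset.exists_natCard_eq_two_pow
  have hper := periodic_comp_add_add_of_add_self_eq_zero f (CharTwo.add_self_eq_zero a)
  have hupper : 2 ^ (k + 1) < 2 ^ m := by
    rw [pow_succ', ← hk, ← GaloisField.card 2 m (by omega)]
    exact two_mul_natCard_range_lt _ (hper.two_le_natCard_fiber ha) ⟨b, hb⟩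
  have hlower : 2 ^ m < 2 ^ (k + 2) := by
    rw [pow_add, mul_comm, ← hk]
    exact hweak a ha
  have := (Nat.pow_lt_pow_iff_right (by norm_num)).mp hupper
  have := (Nat.pow_lt_pow_iff_right (by norm_num)).mp hlower
  omega
end

section
/- Let f(x) = x^d be a permutation of F_{2^m} that is weakly-APN but not APN. Then f is anti-crooked, i.e., for every nonzero a ∈ F_{2^m}, Im(D_a f) is not a coset of any F_2-subspace of F_{2^m}. -/
/-!
In characteristic two every fibre of `D_a f` is stable under `x ↦ x + a`, so it has at least two
points, and for a power map `D_{ca} f (c x) = c^d D_a f (x)`, so a fibre with more than two points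
for one direction yields one for every direction. Hence `2 |Im D_a f| < 2^m` for all `a ≠ 0`. A
coset of an `F_2`-subspace has a power of two as its size, which would then be at most `2^{m-2}`,
against weak APN-ness.
-/

open Finset

theorem two_mul_card_range_lt_of_fibers {α β : Type*} [Finite α] {g : α → β}
    (hpair : ∀ x, ∃ y ≠ x, g y = g x) (hbig : ∃ b, 2 < Nat.card {x | g x = b}) :
    2 * Nat.card (Set.range g) < Nat.card α := by
  classical
  have := Fintype.ofFinite α
  obtain ⟨b, hb⟩ := hbig
  replace hb : 2 < #{x | g x = b} := by
    rwa [Nat.card_eq_card_toFinset, Set.toFinset_ofPred] at hb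
  rw [Nat.card_eq_card_toFinset, Set.toFinset_range, Nat.card_eq_fintype_card, ← card_univ,
    card_eq_sum_card_image g univ, mul_comm, ← smul_eq_mul, ← sum_const]
  refine sum_lt_sum (fun c hc ↦ ?_) ⟨b, ?_, hb⟩
  · obtain ⟨x, -, rfl⟩ := mem_image.mp hc
    obtain ⟨y, hyx, hy⟩ := hpair x
    exact one_lt_card.mpr ⟨y, by simp [hy], x, by simp, hyx⟩
  · obtain ⟨x, hx⟩ := card_pos.mp (hb.trans' two_pos)
    exact (mem_filter.mp hx).2 ▸ mem_image_of_mem g (mem_univ x)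

theorem exists_ne_and_add_diff_eq {R : Type*} [Ring R] [CharP R 2] (f : R → R) {a : R}
    (ha : a ≠ 0) (x : R) : ∃ y ≠ x, f (y + a) + f y = f (x + a) + f x :=
  ⟨x + a, by simpa using ha, by rw [add_assoc, CharTwo.add_self_eq_zero, add_zero, add_comm]⟩

theorem card_fiber_pow_diff_mul {K : Type*} [Field K] (d : ℕ) {c : K} (hc : c ≠ 0) (a b : K) :
    Nat.card {x | (x + c * a) ^ d + x ^ d = c ^ d * b} =
      Nat.card {x | (x + a) ^ d + x ^ d = b} := by
  refine Nat.card_congr (Equiv.subtypeEquiv (Equiv.mulLeft₀ c hc) fun x ↦ ?_).symm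
  simp [← mul_add, mul_pow, hc]

theorem IsSubspaceCoset.exists_card_eq_two_pow {m : ℕ} {A : Set (GaloisField 2 m)}
    (h : IsSubspaceCoset m A) : ∃ k, Nat.card A = 2 ^ k := by
  obtain ⟨w, W, rfl⟩ := h
  refine ⟨Module.finrank (ZMod 2) W, ?_⟩
  rw [Nat.card_image_of_injective (add_right_injective w), SetLike.coe_sort_coe,
    Module.natCard_eq_pow_finrank (K := ZMod 2), Nat.card_zmod]

theorem power_weaklyAPN_not_APN_is_antiCrooked_general
    (m d : ℕ) (hm : 1 ≤ m)
    -- weakly-APN: `|Im(D_a f)| > 2^{m-2}`, stated as `4·|Im(D_a f)| > 2^m`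
    (hweak : ∀ a : GaloisField 2 m, a ≠ 0 →
      2 ^ m < 4 * Nat.card (Set.range fun x => (x + a) ^ d + x ^ d))
    -- not APN
    (hnotAPN : ¬ ∀ a : GaloisField 2 m, a ≠ 0 → ∀ b : GaloisField 2 m,
      Nat.card {x : GaloisField 2 m | (x + a) ^ d + x ^ d = b} ≤ 2) :
    ∀ a : GaloisField 2 m, a ≠ 0 →
      ¬ IsSubspaceCoset m (Set.range fun x => (x + a) ^ d + x ^ d) := by
  intro a ha hcoset
  obtain ⟨k, hk⟩ := hcoset.exists_card_eq_two_pow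
  push Not at hnotAPN
  obtain ⟨a₀, ha₀, b₀, hb₀⟩ := hnotAPN
  have hbig : ∃ b, 2 < Nat.card {x | (x + a) ^ d + x ^ d = b} := by
    have hscale := card_fiber_pow_diff_mul d (div_ne_zero ha ha₀) a₀ b₀
    rw [div_mul_cancel₀ a ha₀] at hscale
    exact ⟨_, hscale ▸ hb₀⟩
  have hlt := two_mul_card_range_lt_of_fibers (exists_ne_and_add_diff_eq (· ^ d) ha) hbig
  rw [GaloisField.card 2 m (by omega), hk, ← pow_succ', Nat.pow_lt_pow_iff_right (by norm_num)]
    at hlt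
  have hgt := hweak a ha
  rw [hk, show 4 = 2 ^ 2 from rfl, ← pow_add, Nat.pow_lt_pow_iff_right (by norm_num)] at hgt
  omega

/-- Let `f(x) = x^d` be a permutation of `F_{2^m}` that is weakly-APN but not
APN.  Then `f` is anti-crooked: for every nonzero `a`, `Im(D_a f)` is not a coset of any
`F_2`-subspace of `F_{2^m}`. -/
theorem power_weaklyAPN_not_APN_is_antiCrooked
    (m d : ℕ) (hm : 1 ≤ m)
    (hperm : Function.Bijective (fun x : GaloisField 2 m => x ^ d))
    -- weakly-APN: `|Im(D_a f)| > 2^{m-2}`, stated as `4·|Im(D_a f)| > 2^m`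
    (hweak : ∀ a : GaloisField 2 m, a ≠ 0 →
      2 ^ m < 4 * Nat.card (Set.range fun x => (x + a) ^ d + x ^ d))
    -- not APN
    (hnotAPN : ¬ ∀ a : GaloisField 2 m, a ≠ 0 → ∀ b : GaloisField 2 m,
      Nat.card {x : GaloisField 2 m | (x + a) ^ d + x ^ d = b} ≤ 2) :
    ∀ a : GaloisField 2 m, a ≠ 0 →
      ¬ IsSubspaceCoset m (Set.range fun x => (x + a) ^ d + x ^ d) :=
  power_weaklyAPN_not_APN_is_antiCrooked_general m d hm hweak hnotAPN
end
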